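/- Let G be a group with automatic structures L₁ ⊆ A* for π₁ : A* → G and L₂ ⊆ B* for π₂ : B* → G, and let φ be an endomorphism of G such that L₁ induces an automatic structure L₁^(φ) through φ and the BRP holds for (φ, L₁, L₂). Then the subgroup {(x, 1) : x ∈ Ker(φ)} of G × Gφ, which is isomorphic to Ker(φ), is (L₁ ⋄ L₁^(φ))-quasiconvex, where L₁ ⋄ L₁^(φ) is the convolution automatic structure on G × Gφ. In particular, Ker(φ) is an automatic group. -/

import Mathlib

open scoped NNReal

namespace Auto

/-- The generating set `Aπ ∪ (Aπ)⁻¹` of `G` determined by `π : A* → G`. -/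
def gens {A G : Type*} [Group G] (π : FreeMonoid A →* G) : Set G :=
  (Set.range fun a : A => π (FreeMonoid.of a)) ∪
    Set.range fun a : A => (π (FreeMonoid.of a))⁻¹

/-- The word metric `d_A` on `G`: the least `n` such that `g⁻¹h` is a product of `n`
elements of `Aπ ∪ (Aπ)⁻¹`. -/
noncomputable def wdist {A G : Type*} [Group G] (π : FreeMonoid A →* G) (g h : G) : ℕ :=
  sInf {n : ℕ | ∃ l : List G, l.length = n ∧ (∀ x ∈ l, x ∈ gens π) ∧ l.prod = g⁻¹ * h}

/-- Evaluation of a word of `A*` in `G`. -/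
def evalW {A G : Type*} [Group G] (π : FreeMonoid A →* G) (w : List A) : G :=
  π (FreeMonoid.ofList w)

/-- `u` and `v` `p`-fellow travel: `d_A(u^[n]π, v^[n]π) ≤ p` for all `n`. -/
def FellowTravel {A G : Type*} [Group G] (π : FreeMonoid A →* G) (p : ℝ≥0)
    (u v : List A) : Prop :=
  ∀ n : ℕ, (wdist π (evalW π (u.take n)) (evalW π (v.take n)) : ℝ≥0) ≤ p

/-- `u` and `v` are `p`-meeting-fellow-travellers. -/
def MFT {A G : Type*} [Group G] (π : FreeMonoid A →* G) (p : ℝ≥0) (u v : List A) : Prop :=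
  FellowTravel π p u v ∧ evalW π u = evalW π v

/-- A language is regular if it is accepted by a finite-state automaton. -/
def IsRegular {A : Type*} (L : Language A) : Prop :=
  ∃ (σ : Type) (_ : Fintype σ) (M : DFA A σ), M.accepts = L

/-- `L` is an automatic structure for `π`. -/
structure IsAutomaticStructure {A G : Type*} [Group G] (π : FreeMonoid A →* G)
    (L : Language A) : Prop where
  regular : IsRegular L
  onto : ∀ g : G, ∃ w ∈ L, evalW π w = g
  ft : ∃ N : ℕ, ∀ u ∈ L, ∀ v ∈ L,
    wdist π (evalW π u) (evalW π v) ≤ 1 → FellowTravel π N u v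

/-- Evaluation of an element of `A ∪ {ε}`. -/
def evalOpt {A G : Type*} [Group G] (π : FreeMonoid A →* G) : Option A → G
  | none => 1
  | some a => π (FreeMonoid.of a)

/-- `L` is a biautomatic structure for `π`. -/
structure IsBiautomaticStructure {A G : Type*} [Group G] (π : FreeMonoid A →* G)
    (L : Language A) extends IsAutomaticStructure π L : Prop where
  bi : ∃ N : ℕ, ∀ u ∈ L, ∀ v ∈ L, ∀ a : Option A,
    evalW π v = evalOpt π a * evalW π u →
    ∀ n : ℕ, wdist π (evalOpt π a * evalW π (u.take n)) (evalW π (v.take n)) ≤ N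

/-- A language is factorial if it is closed under taking factors. -/
def IsFactorial {A : Type*} (L : Language A) : Prop :=
  ∀ u ∈ L, ∀ v : List A, v <:+: u → v ∈ L

/-- `D : ℝ≥0 → ℝ≥0` is a departure function for `(G, L)`. -/
def IsDepartureFunction {A G : Type*} [Group G] (π : FreeMonoid A →* G) (L : Language A)
    (D : ℝ≥0 → ℝ≥0) : Prop :=
  ∀ w ∈ L, ∀ r : ℝ≥0, ∀ s t : ℕ, D r ≤ (t : ℝ≥0) → s + t ≤ w.length →
    r < (wdist π (evalW π (w.take s)) (evalW π (w.take (s + t))) : ℝ≥0)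

/-- Every point of `S` is within distance `N` of `T`. -/
def NbhdIn {A G : Type*} [Group G] (π : FreeMonoid A →* G) (N : ℕ) (S T : Set G) : Prop :=
  ∀ s ∈ S, ∃ t ∈ T, wdist π s t ≤ N

/-- The Hausdorff distance between `S` and `T` is at most `N`. -/
def HausdorffLE {A G : Type*} [Group G] (π : FreeMonoid A →* G) (N : ℕ)
    (S T : Set G) : Prop :=
  NbhdIn π N S T ∧ NbhdIn π N T S

/-- `H` is an `L`-quasiconvex subgroup of `G`. -/
def IsQuasiconvex {A G : Type*} [Group G] (π : FreeMonoid A →* G) (L : Language A)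
    (H : Subgroup G) : Prop :=
  ∃ k : ℕ, ∀ h ∈ H, ∀ h' ∈ H, ∀ w ∈ L, h * evalW π w = h' →
    ∀ n : ℕ, ∃ z ∈ H, wdist π (h * evalW π (w.take n)) z ≤ k

/-- The bounded reduction property for `(φ, L, L')`. -/
def BRP {A B G G' : Type*} [Group G] [Group G'] (π : FreeMonoid A →* G)
    (π' : FreeMonoid B →* G') (φ : G →* G') (L : Language A) (L' : Language B) : Prop :=
  ∃ N : ℕ, ∀ x : G, ∀ α ∈ L, ∀ β ∈ L', evalW π' β = φ (evalW π α) →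
    HausdorffLE π' N (Set.range fun n : ℕ => φ (x * evalW π (α.take n)))
      (Set.range fun n : ℕ => φ x * evalW π' (β.take n))

/-- The synchronous bounded reduction property for `(φ, L, L')`. -/
def SyncBRP {A B G G' : Type*} [Group G] [Group G'] (π : FreeMonoid A →* G)
    (π' : FreeMonoid B →* G') (φ : G →* G') (L : Language A) (L' : Language B) : Prop :=
  ∃ N : ℕ, ∀ x : G, ∀ α ∈ L, ∀ β ∈ L', evalW π' β = φ (evalW π α) →
    ∀ n : ℕ, wdist π' (φ (x * evalW π (α.take n))) (φ x * evalW π' (β.take n)) ≤ N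

/-- The fellow traveller bounded reduction property (FT-BRP) for `(φ, L, L')`. -/
def FTBRP {A B G G' : Type*} [Group G] [Group G'] (π : FreeMonoid A →* G)
    (π' : FreeMonoid B →* G') (φ : G →* G') (L : Language A) (L' : Language B) : Prop :=
  ∀ p : ℝ≥0, ∃ q : ℝ≥0,
    ∀ u₁ ∈ L, ∀ u₂ ∈ L, ∀ u₃ ∈ L, ∀ u₁' ∈ L', ∀ u₂' ∈ L', ∀ u₃' ∈ L',
      evalW π' u₁' = φ (evalW π u₁) → evalW π' u₂' = φ (evalW π u₂) →
        evalW π' u₃' = φ (evalW π u₃) →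
          MFT π p (u₁ ++ u₂) u₃ → MFT π' q (u₁' ++ u₂') u₃'

/-- The natural homomorphism `(A ⊔ B)* → G` agreeing with `π₁` on `A` and `π₂` on `B`. -/
def sumHom {A B G : Type*} [Group G] (π₁ : FreeMonoid A →* G) (π₂ : FreeMonoid B →* G) :
    FreeMonoid (A ⊕ B) →* G :=
  FreeMonoid.lift (Sum.elim (fun a => π₁ (FreeMonoid.of a)) fun b => π₂ (FreeMonoid.of b))

/-- The union `L₁ ∪ L₂` viewed as a language over `A ⊔ B`. -/
def unionLang {A B : Type*} (L₁ : Language A) (L₂ : Language B) : Language (A ⊕ B) :=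
  {w : List (A ⊕ B) | (∃ u ∈ L₁, w = u.map Sum.inl) ∨ ∃ v ∈ L₂, w = v.map Sum.inr}

/-- `L` is an asynchronous automatic structure for `π`. -/
def IsAsyncAutomaticStructure {A G : Type*} [Group G] (π : FreeMonoid A →* G)
    (L : Language A) : Prop :=
  IsRegular L ∧ (∀ g : G, ∃ w ∈ L, evalW π w = g) ∧
    ∃ p : ℕ, ∀ u ∈ L, ∀ v ∈ L, wdist π (evalW π u) (evalW π v) ≤ 1 →
      ∃ φ ψ : ℕ → ℕ, Monotone φ ∧ Monotone ψ ∧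
        Function.Surjective φ ∧ Function.Surjective ψ ∧
          ∀ t : ℕ, wdist π (evalW π (u.take (φ t))) (evalW π (v.take (ψ t))) ≤ p

/-- `L₁` and `L₂` are equivalent automatic structures. -/
def LangEquivalent {A B G : Type*} [Group G] (π₁ : FreeMonoid A →* G)
    (π₂ : FreeMonoid B →* G) (L₁ : Language A) (L₂ : Language B) : Prop :=
  IsAsyncAutomaticStructure (sumHom π₁ π₂) (unionLang L₁ L₂)

/-- `L₁` and `L₂` are synchronously equivalent automatic structures. -/
def LangSyncEquivalent {A B G : Type*} [Group G] (π₁ : FreeMonoid A →* G)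
    (π₂ : FreeMonoid B →* G) (L₁ : Language A) (L₂ : Language B) : Prop :=
  IsAutomaticStructure (sumHom π₁ π₂) (unionLang L₁ L₂)

/-- `L` has the Hausdorff closeness property. -/
def HausClose {A G : Type*} [Group G] (π : FreeMonoid A →* G) (L : Language A) : Prop :=
  ∃ N : ℕ, ∀ u ∈ L, ∀ v ∈ L, wdist π (evalW π u) (evalW π v) ≤ 1 →
    HausdorffLE π N (Set.range fun n : ℕ => evalW π (u.take n))
      (Set.range fun n : ℕ => evalW π (v.take n))

/-- The padded alphabet `C = (A×B) ∪ (A×{$}) ∪ ({$}×B)` of convolution. -/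
abbrev ConvAlphabet (A B : Type*) := (A × B) ⊕ (A ⊕ B)

/-- The convolution `u ⋄ v` of two words. -/
def conv {A B : Type*} : List A → List B → List (ConvAlphabet A B)
  | [], [] => []
  | [], b :: v => Sum.inr (Sum.inr b) :: conv [] v
  | a :: u, [] => Sum.inr (Sum.inl a) :: conv u []
  | a :: u, b :: v => Sum.inl (a, b) :: conv u v
  termination_by u v => u.length + v.length

/-- The convolution `L₁ ⋄ L₂` of two languages. -/
def convLang {A B : Type*} (L₁ : Language A) (L₂ : Language B) :
    Language (ConvAlphabet A B) :=
  {w : List (ConvAlphabet A B) | ∃ u ∈ L₁, ∃ v ∈ L₂, w = conv u v}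

/-- The natural homomorphism `C* → G × G'` for the convolution alphabet. -/
def convHom {A B G G' : Type*} [Group G] [Group G'] (π₁ : FreeMonoid A →* G)
    (π₂ : FreeMonoid B →* G') : FreeMonoid (ConvAlphabet A B) →* G × G' :=
  FreeMonoid.lift fun c =>
    match c with
    | Sum.inl (a, b) => (π₁ (FreeMonoid.of a), π₂ (FreeMonoid.of b))
    | Sum.inr (Sum.inl a) => (π₁ (FreeMonoid.of a), 1)
    | Sum.inr (Sum.inr b) => (1, π₂ (FreeMonoid.of b))

/-- A group is automatic if it admits an automatic structure over some finite alphabet. -/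
def IsAutomaticGroup (G : Type*) [Group G] : Prop :=
  ∃ (A : Type) (_ : Fintype A) (π : FreeMonoid A →* G) (L : Language A),
    IsAutomaticStructure π L

end Auto

/-!
A word of `L₁` that is trivial in `Gφ` fellow travels a fixed representative of `1` there, so
all its prefixes stay in a fixed finite ball `B` of `Gφ`. Quasiconvexity follows: the prefix
`(h · u^[n]π₁, v^[n]π₁φ)` of a path between points of `Ker φ × 1` is brought back into
`Ker φ × 1` by a correction of bounded length in each coordinate.

For automaticity, fix a section `σ` of `G → Gφ` with `σ 1 = 1` and tag each letter `a` of a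
word `u` with `uπ₁φ = 1` by the value `y ∈ B` of the prefix before it. The tagged letter `(y, a)`
stands for the kernel element `σ y · aπ₁ · (σ (y · aπ₁φ))⁻¹`; these telescope to the values of
the prefixes of `u` up to a correction `σ y⁻¹` from a finite set. So the tagged language is
regular (a finite automaton checks the tags) and maps onto `Ker φ`, and its fellow traveller
property comes from that of `L₁`, since on bounded sets the word metrics of `Ker φ` and of `G`
control each other.
-/

namespace Auto

section WordMetric

variable {A G : Type*} [Group G] {π : FreeMonoid A →* G}

@[simp]
theorem evalW_nil : evalW π [] = 1 :=
  map_one π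

@[simp]
theorem evalW_cons (a : A) (w : List A) : evalW π (a :: w) = π (.of a) * evalW π w :=
  map_mul π (.of a) (.ofList w)

theorem evalW_comp {Q : Type*} [Group Q] (ψ : G →* Q) (w : List A) :
    evalW (ψ.comp π) w = ψ (evalW π w) :=
  rfl

theorem evalW_eq_prod_map (w : List A) : evalW π w = (w.map fun a => π (.of a)).prod := by
  induction w with
  | nil => simp
  | cons a w ih => simp [ih]

theorem surjective_of_onto {L : Language A} (h : ∀ g : G, ∃ w ∈ L, evalW π w = g) :
    Function.Surjective π := fun g =>
  let ⟨w, _, hw⟩ := h g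
  ⟨.ofList w, hw⟩

theorem IsAutomaticStructure.surjective {L : Language A} (h : IsAutomaticStructure π L) :
    Function.Surjective π :=
  surjective_of_onto h.onto

theorem apply_of_mem_gens (a : A) : π (.of a) ∈ gens π :=
  Or.inl ⟨a, rfl⟩

theorem inv_mem_gens {x : G} (hx : x ∈ gens π) : x⁻¹ ∈ gens π := by
  rcases hx with ⟨a, rfl⟩ | ⟨a, rfl⟩
  · exact Or.inr ⟨a, rfl⟩
  · exact Or.inl ⟨a, (inv_inv _).symm⟩

theorem gens_finite [Finite A] (π : FreeMonoid A →* G) : (gens π).Finite :=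
  (Set.finite_range _).union (Set.finite_range _)

theorem wdist_le_length {g h : G} {l : List G} (hl : ∀ x ∈ l, x ∈ gens π)
    (hprod : l.prod = g⁻¹ * h) : wdist π g h ≤ l.length :=
  Nat.sInf_le ⟨l, rfl, hl, hprod⟩

theorem wdist_self (g : G) : wdist π g g = 0 :=
  Nat.le_zero.mp (wdist_le_length (l := []) (by simp) (by simp))

theorem wdist_eq_wdist_one (g h : G) : wdist π g h = wdist π 1 (g⁻¹ * h) := by
  simp [wdist]

theorem wdist_mul_left (k g h : G) : wdist π (k * g) (k * h) = wdist π g h := by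
  simp [wdist, mul_assoc]

theorem wdist_self_mul (g h : G) : wdist π g (g * h) = wdist π 1 h := by
  rw [wdist_eq_wdist_one, inv_mul_cancel_left]

theorem wdist_evalW_le (w : List A) : wdist π 1 (evalW π w) ≤ w.length := by
  simpa [evalW_eq_prod_map] using
    wdist_le_length (π := π) (l := w.map fun a => π (.of a)) (by simp [apply_of_mem_gens]) (by simp)

theorem wdist_le_one {x : G} (hx : x ∈ gens π) : wdist π 1 x ≤ 1 :=
  wdist_le_length (l := [x]) (by simpa using hx) (by simp)

section Surjective

variable (hπ : Function.Surjective π)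
include hπ

theorem exists_gens_list (g h : G) :
    ∃ l : List G, l.length = wdist π g h ∧ (∀ x ∈ l, x ∈ gens π) ∧ l.prod = g⁻¹ * h := by
  obtain ⟨w, hw⟩ := hπ (g⁻¹ * h)
  have hne : {n | ∃ l : List G, l.length = n ∧ (∀ x ∈ l, x ∈ gens π) ∧ l.prod = g⁻¹ * h}.Nonempty :=
    ⟨_, (FreeMonoid.toList w).map fun a => π (.of a), rfl, by simp [apply_of_mem_gens],
      by rw [← evalW_eq_prod_map, ← hw]; rfl⟩
  exact Nat.sInf_mem hne

theorem wdist_triangle (g k h : G) : wdist π g h ≤ wdist π g k + wdist π k h := by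
  obtain ⟨l₁, hl₁, hm₁, hp₁⟩ := exists_gens_list hπ g k
  obtain ⟨l₂, hl₂, hm₂, hp₂⟩ := exists_gens_list hπ k h
  calc wdist π g h ≤ (l₁ ++ l₂).length :=
        wdist_le_length (by simpa using fun x hx => hx.elim (hm₁ x) (hm₂ x))
          (by simp [hp₁, hp₂, mul_assoc])
    _ = _ := by simp [hl₁, hl₂]

theorem wdist_comm (g h : G) : wdist π g h = wdist π h g := by
  suffices ∀ g h : G, wdist π h g ≤ wdist π g h from le_antisymm (this h g) (this g h)
  intro g h
  obtain ⟨l, hl, hm, hp⟩ := exists_gens_list hπ g h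
  calc wdist π h g ≤ (l.map (·⁻¹)).reverse.length :=
        wdist_le_length (by simpa using fun x hx => by simpa using inv_mem_gens (hm x⁻¹ hx))
          (by rw [← List.prod_inv_reverse, hp]; group)
    _ = _ := by simp [hl]

theorem wdist_one_mul_le (a b : G) : wdist π 1 (a * b) ≤ wdist π 1 a + wdist π 1 b := by
  simpa [wdist_self_mul] using wdist_triangle hπ 1 a (a * b)

theorem wdist_one_inv (a : G) : wdist π 1 a⁻¹ = wdist π 1 a := by
  rw [wdist_comm hπ, ← wdist_self_mul a⁻¹, inv_mul_cancel]

theorem exists_wdist_le_one_of_wdist_le_succ {g h : G} {D : ℕ} (hd : wdist π g h ≤ D + 1) :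
    ∃ k, wdist π g k ≤ 1 ∧ wdist π k h ≤ D := by
  obtain ⟨l, hl, hm, hp⟩ := exists_gens_list hπ g h
  cases l with
  | nil => exact ⟨g, by simp [wdist_self], by simp at hl; omega⟩
  | cons s l =>
    refine ⟨g * s, ?_, ?_⟩
    · simpa [wdist_self_mul] using wdist_le_one (hm s (by simp))
    · calc wdist π (g * s) h ≤ l.length :=
            wdist_le_length (fun x hx => hm x (by simp [hx])) (by simp [mul_assoc, ← hp])
        _ ≤ D := by simp at hl; omega

theorem finite_setOf_wdist_le [Finite A] (R : ℕ) : {g | wdist π 1 g ≤ R}.Finite := by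
  have := (gens_finite π).to_subtype
  refine ((List.finite_length_le (gens π) R).image fun l => (l.map Subtype.val).prod).subset ?_
  intro g hg
  obtain ⟨l, hl, hm, hp⟩ := exists_gens_list hπ 1 g
  refine ⟨l.attach.map fun x => ⟨x.1, hm x.1 x.2⟩, by simpa [hl] using hg, ?_⟩
  simp [hp]

end Surjective

end WordMetric

section AutomaticStructure

variable {A G : Type*} [Group G] {π : FreeMonoid A →* G} {L : Language A}

theorem fellowTravel_natCast_iff {N : ℕ} {u v : List A} :
    FellowTravel π N u v ↔ ∀ n, wdist π (evalW π (u.take n)) (evalW π (v.take n)) ≤ N := by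
  simp [FellowTravel]

theorem IsAutomaticStructure.exists_prefix_bound (h : IsAutomaticStructure π L) :
    ∃ M, ∀ u ∈ L, evalW π u = 1 → ∀ n, wdist π 1 (evalW π (u.take n)) ≤ M := by
  obtain ⟨N, hN⟩ := h.ft
  obtain ⟨w₀, hw₀L, hw₀⟩ := h.onto 1
  refine ⟨w₀.length + N, fun u hu hu1 n => ?_⟩
  have hft := fellowTravel_natCast_iff.mp
    (hN w₀ hw₀L u hu (by simp [hw₀, hu1, wdist_self])) n
  calc wdist π 1 (evalW π (u.take n))
      ≤ wdist π 1 (evalW π (w₀.take n)) + wdist π (evalW π (w₀.take n)) (evalW π (u.take n)) :=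
        wdist_triangle h.surjective _ _ _
    _ ≤ w₀.length + N := by
        gcongr
        exact (wdist_evalW_le _).trans (List.length_take_le' _ _)

theorem IsAutomaticStructure.exists_fellowTravel_of_wdist_le (h : IsAutomaticStructure π L) :
    ∃ N, ∀ D, ∀ u ∈ L, ∀ v ∈ L, wdist π (evalW π u) (evalW π v) ≤ D →
      ∀ n, wdist π (evalW π (u.take n)) (evalW π (v.take n)) ≤ N * (D + 1) := by
  obtain ⟨N, hN⟩ := h.ft
  refine ⟨N, fun D => ?_⟩
  induction D with
  | zero =>
    intro u hu v hv hd
    simpa using fellowTravel_natCast_iff.mp (hN u hu v hv (by omega))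
  | succ D ih =>
    intro u hu v hv hd n
    obtain ⟨k, huk, hkv⟩ := exists_wdist_le_one_of_wdist_le_succ h.surjective hd
    obtain ⟨w, hw, rfl⟩ := h.onto k
    calc wdist π (evalW π (u.take n)) (evalW π (v.take n))
        ≤ wdist π (evalW π (u.take n)) (evalW π (w.take n)) +
            wdist π (evalW π (w.take n)) (evalW π (v.take n)) :=
          wdist_triangle h.surjective _ _ _
      _ ≤ N + N * (D + 1) := add_le_add (fellowTravel_natCast_iff.mp (hN u hu w hw huk) n)
          (ih w hw v hv hkv n)
      _ = N * (D + 1 + 1) := by ring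

theorem IsRegular.preimage_map {A' : Type*} (f : A' → A) (hL : IsRegular L) :
    IsRegular {w : List A' | w.map f ∈ L} := by
  obtain ⟨σ, _, M, rfl⟩ := hL
  exact ⟨σ, inferInstance, M.comap f, by simp; rfl⟩

theorem gens_comp_map {A' : Type*} {f : A' → A} (hf : Function.Surjective f) :
    gens (π.comp (FreeMonoid.map f)) = gens π := by
  simp only [gens, MonoidHom.comp_apply, FreeMonoid.map_of]
  exact congrArg₂ (· ∪ ·) (hf.range_comp fun a => π (.of a))
    (hf.range_comp fun a => (π (.of a))⁻¹)

theorem wdist_comp_map {A' : Type*} {f : A' → A} (hf : Function.Surjective f) :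
    wdist (π.comp (FreeMonoid.map f)) = wdist π := by
  funext g h
  simp only [wdist, gens_comp_map hf]

theorem evalW_comp_map {A' : Type*} (f : A' → A) (w : List A') :
    evalW (π.comp (FreeMonoid.map f)) w = evalW π (w.map f) := by
  induction w with
  | nil => simp
  | cons a w ih => simp [ih]

theorem IsAutomaticStructure.comap_equiv {A' : Type*} (e : A' ≃ A) (h : IsAutomaticStructure π L) :
    IsAutomaticStructure (π.comp (FreeMonoid.map e)) {w | w.map e ∈ L} where
  regular := h.regular.preimage_map e
  onto g := by
    obtain ⟨w, hw, rfl⟩ := h.onto g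
    exact ⟨w.map e.symm, show _ ∈ L by simpa [List.map_map] using hw,
      by simp [evalW_comp_map, List.map_map]⟩
  ft := by
    obtain ⟨N, hN⟩ := h.ft
    refine ⟨N, fun u hu v hv hd n => ?_⟩
    simp only [wdist_comp_map e.surjective, evalW_comp_map, List.map_take] at hd ⊢
    exact hN _ hu _ hv hd n

theorem IsAutomaticStructure.isAutomaticGroup [Finite A] (h : IsAutomaticStructure π L) :
    IsAutomaticGroup G :=
  have := Fintype.ofFinite A
  ⟨_, inferInstance, _, _, h.comap_equiv (Fintype.equivFin A).symm⟩

end AutomaticStructure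

section Convolution

variable {A B G Q : Type*} [Group G] [Group Q]

theorem conv_take (u : List A) (v : List B) (n : ℕ) :
    (conv u v).take n = conv (u.take n) (v.take n) := by
  induction u generalizing v n with
  | nil =>
    induction v generalizing n with
    | nil => simp [conv]
    | cons b v ih => cases n <;> simp [conv, ih]
  | cons a u ih =>
    cases v <;> cases n <;> simp [conv, ih]

variable (π : FreeMonoid A →* G) (ρ : FreeMonoid B →* Q)

@[simp]
theorem convHom_of_pair (a : A) (b : B) :
    convHom π ρ (.of (.inl (a, b))) = (π (.of a), ρ (.of b)) :=
  rfl

@[simp]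
theorem convHom_of_left (a : A) : convHom π ρ (.of (.inr (.inl a))) = (π (.of a), 1) :=
  rfl

@[simp]
theorem convHom_of_right (b : B) : convHom π ρ (.of (.inr (.inr b))) = (1, ρ (.of b)) :=
  rfl

theorem evalW_conv (u : List A) (v : List B) :
    evalW (convHom π ρ) (conv u v) = (evalW π u, evalW ρ v) := by
  induction u generalizing v with
  | nil =>
    induction v with
    | nil => simp [conv]; rfl
    | cons b v ih => simp [conv, ih]
  | cons a u ih =>
    cases v with
    | nil => simp [conv, ih []]
    | cons b v => simp [conv, ih]

variable {π ρ}

theorem wdist_convHom_le {π : FreeMonoid A →* G} {ρ : FreeMonoid B →* Q}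
    (hπ : Function.Surjective π) (hρ : Function.Surjective ρ) (g g' : G) (q q' : Q) :
    wdist (convHom π ρ) (g, q) (g', q') ≤ wdist π g g' + wdist ρ q q' := by
  obtain ⟨l₁, hl₁, hm₁, hp₁⟩ := exists_gens_list hπ g g'
  obtain ⟨l₂, hl₂, hm₂, hp₂⟩ := exists_gens_list hρ q q'
  have hinl : ∀ x ∈ gens π, MonoidHom.inl G Q x ∈ gens (convHom π ρ) := by
    rintro _ (⟨a, rfl⟩ | ⟨a, rfl⟩)
    · exact Or.inl ⟨.inr (.inl a), by simp⟩
    · exact Or.inr ⟨.inr (.inl a), by simp⟩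
  have hinr : ∀ y ∈ gens ρ, MonoidHom.inr G Q y ∈ gens (convHom π ρ) := by
    rintro _ (⟨b, rfl⟩ | ⟨b, rfl⟩)
    · exact Or.inl ⟨.inr (.inr b), by simp⟩
    · exact Or.inr ⟨.inr (.inr b), by simp⟩
  calc wdist (convHom π ρ) (g, q) (g', q')
      ≤ (l₁.map (MonoidHom.inl G Q) ++ l₂.map (MonoidHom.inr G Q)).length := by
        refine wdist_le_length ?_ ?_
        · simp only [List.mem_append, List.mem_map]
          rintro _ (⟨x, hx, rfl⟩ | ⟨y, hy, rfl⟩)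
          exacts [hinl x (hm₁ x hx), hinr y (hm₂ y hy)]
        · simp [← map_list_prod, hp₁, hp₂]
    _ = _ := by simp [hl₁, hl₂]

end Convolution

section Quasiconvex

variable {A G Q : Type*} [Group G] [Group Q] {π : FreeMonoid A →* G}

theorem gens_comp (ψ : G →* Q) : gens (ψ.comp π) = ψ '' gens π := by
  simp [gens, Set.image_union, ← Set.range_comp, Function.comp_def]

theorem exists_preimage_wdist_le (hπ : Function.Surjective π) {ψ : G →* Q}
    (hρ : Function.Surjective (ψ.comp π)) (q : Q) :
    ∃ g, ψ g = q ∧ wdist π 1 g ≤ wdist (ψ.comp π) 1 q := by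
  obtain ⟨l, hl, hm, hp⟩ := exists_gens_list hρ 1 q
  rw [inv_one, one_mul] at hp
  rw [← hl, ← hp]
  clear hl hp
  induction l with
  | nil => exact ⟨1, by simp, by simp [wdist_self]⟩
  | cons s l ih =>
    obtain ⟨x, hx, rfl⟩ : s ∈ ψ '' gens π := gens_comp ψ ▸ hm s (by simp)
    obtain ⟨g, hg, hgl⟩ := ih fun y hy => hm y (by simp [hy])
    refine ⟨x * g, by simp [hg], ?_⟩
    calc wdist π 1 (x * g) ≤ wdist π 1 x + wdist π 1 g := wdist_one_mul_le hπ x g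
      _ ≤ 1 + l.length := add_le_add (wdist_le_one hx) hgl
      _ = _ := by simp [add_comm]

theorem isQuasiconvex_ker_prod_bot (hπ : Function.Surjective π) {L : Language A} (ψ : G →* Q)
    (hQ : IsAutomaticStructure (ψ.comp π) L) :
    IsQuasiconvex (convHom π (ψ.comp π)) (convLang L L) (ψ.ker.prod ⊥) := by
  obtain ⟨M, hM⟩ := hQ.exists_prefix_bound
  refine ⟨M + M, ?_⟩
  rintro ⟨h, _⟩ hh ⟨h', _⟩ hh' _ ⟨u, hu, v, hv, rfl⟩ heq n
  simp only [Subgroup.mem_prod, MonoidHom.mem_ker, Subgroup.mem_bot] at hh hh'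
  obtain ⟨hh, rfl⟩ := hh
  obtain ⟨hh', rfl⟩ := hh'
  simp only [evalW_conv, Prod.mk_mul_mk, one_mul, Prod.mk.injEq] at heq
  have hu1 : evalW (ψ.comp π) u = 1 := by
    rw [evalW_comp, eq_inv_mul_of_mul_eq heq.1, map_mul, map_inv, hh, hh', inv_one, one_mul]
  obtain ⟨g, hg, hgM⟩ := exists_preimage_wdist_le hπ hQ.surjective (evalW (ψ.comp π) (u.take n))⁻¹
  refine ⟨(h * evalW π (u.take n) * g, 1), ?_, ?_⟩
  · simp [Subgroup.mem_prod, hh, hg, evalW_comp]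
  · rw [conv_take, evalW_conv]
    calc _ = wdist (convHom π (ψ.comp π))
            ((h * evalW π (u.take n), 1) * (1, evalW (ψ.comp π) (v.take n)))
            ((h * evalW π (u.take n), 1) * (g, 1)) := by simp
      _ = wdist (convHom π (ψ.comp π)) (1, evalW (ψ.comp π) (v.take n)) (g, 1) :=
          wdist_mul_left _ _ _
      _ ≤ wdist π 1 g + wdist (ψ.comp π) (evalW (ψ.comp π) (v.take n)) 1 :=
          wdist_convHom_le hπ hQ.surjective _ _ _ _
      _ ≤ M + M := add_le_add
          (hgM.trans ((wdist_one_inv hQ.surjective _).trans_le (hM u hu hu1 n)))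
          ((wdist_comm hQ.surjective _ _).trans_le (hM v hv heq.2 n))

end Quasiconvex

section Lipschitz

variable {A A' G H : Type*} [Group G] [Group H] {π : FreeMonoid A →* G}

theorem wdist_one_list_prod_le (hπ : Function.Surjective π) {R : ℕ} {l : List G}
    (hl : ∀ x ∈ l, wdist π 1 x ≤ R) : wdist π 1 l.prod ≤ R * l.length := by
  induction l with
  | nil => simp [wdist_self]
  | cons x l ih =>
    calc wdist π 1 (x :: l).prod ≤ wdist π 1 x + wdist π 1 l.prod := wdist_one_mul_le hπ _ _
      _ ≤ R + R * l.length := add_le_add (hl x (by simp)) (ih fun y hy => hl y (by simp [hy]))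
      _ = R * (x :: l).length := by simp [mul_add, add_comm]

theorem wdist_map_le {πH : FreeMonoid A' →* H} (hπH : Function.Surjective πH)
    (hπ : Function.Surjective π) {f : H →* G} {R : ℕ}
    (hf : ∀ x ∈ gens πH, wdist π 1 (f x) ≤ R) (g h : H) :
    wdist π (f g) (f h) ≤ R * wdist πH g h := by
  obtain ⟨l, hl, hm, hp⟩ := exists_gens_list hπH g h
  rw [wdist_eq_wdist_one, ← map_inv, ← map_mul, ← hp, map_list_prod, ← hl]
  simpa using wdist_one_list_prod_le hπ (l := l.map f) (by simpa using fun x hx => hf x (hm x hx))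

theorem exists_wdist_gens_map_le [Finite A'] (πH : FreeMonoid A' →* H) (f : H →* G) :
    ∃ R, ∀ x ∈ gens πH, wdist π 1 (f x) ≤ R := by
  obtain ⟨R, hR⟩ := ((gens_finite πH).image fun x => wdist π 1 (f x)).bddAbove
  exact ⟨R, fun x hx => hR ⟨x, hx, rfl⟩⟩

theorem exists_wdist_le_of_wdist_map_le [Finite A] (hπ : Function.Surjective π)
    (πH : FreeMonoid A' →* H) {f : H →* G} (hf : Function.Injective f) (R : ℕ) :
    ∃ c, ∀ h, wdist π 1 (f h) ≤ R → wdist πH 1 h ≤ c := by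
  obtain ⟨c, hc⟩ := (((finite_setOf_wdist_le hπ R).preimage hf.injOn).image
    fun h => wdist πH 1 h).bddAbove
  exact ⟨c, fun h hh => hc ⟨h, hh, rfl⟩⟩

end Lipschitz

theorem NFA.nonempty_evalFrom_take {α σ : Type*} {M : NFA α σ} {S : Set σ} {w : List α}
    (h : (M.evalFrom S w).Nonempty) (n : ℕ) : (M.evalFrom S (w.take n)).Nonempty := by
  rw [← List.take_append_drop n w, NFA.evalFrom_append] at h
  obtain ⟨s, hs⟩ := h
  obtain ⟨t, ht, -⟩ := NFA.mem_evalFrom_iff_exists.mp hs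
  exact ⟨t, ht⟩

section KernelStructure

variable {A G Q : Type*} [Group G] [Group Q]

def traceNFA (ρ : FreeMonoid A →* Q) (B : Finset Q) : NFA (B × A) B where
  step y x := {y' | x.1 = y ∧ (y' : Q) = y * ρ (.of x.2)}
  start := {y | (y : Q) = 1}
  accept := {y | (y : Q) = 1}

variable (π : FreeMonoid A →* G) (ψ : G →* Q) {σ : Q → G} (hσ : ∀ y, ψ (σ y) = y) (B : Finset Q)

def kernelGen (x : B × A) : ψ.ker :=
  ⟨σ x.1 * π (.of x.2) * (σ (x.1 * ψ (π (.of x.2))))⁻¹, by simp [hσ]⟩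

def kernelHom : FreeMonoid (B × A) →* ψ.ker :=
  FreeMonoid.lift (kernelGen π ψ hσ B)

def kernelLang (L : Language A) : Language (B × A) :=
  {α | α.map Prod.snd ∈ L ∧ α ∈ (traceNFA (ψ.comp π) B).accepts}

variable {π ψ B}

theorem mem_traceNFA_evalFrom {α : List (B × A)} {y y' : B}
    (h : y' ∈ (traceNFA (ψ.comp π) B).evalFrom {y} α) :
    (y' : Q) = y * evalW (ψ.comp π) (α.map Prod.snd) ∧
      ((evalW (kernelHom π ψ hσ B) α : ψ.ker) : G) = σ y * evalW π (α.map Prod.snd) * (σ y')⁻¹ := by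
  induction α generalizing y with
  | nil =>
    obtain rfl : y' = y := h
    simp
  | cons x α ih =>
    rw [NFA.evalFrom_cons, NFA.stepSet_singleton, NFA.mem_evalFrom_iff_exists] at h
    obtain ⟨t, ⟨rfl, ht⟩, hy'⟩ := h
    obtain ⟨hval, heval⟩ := ih hy'
    refine ⟨by simp [hval, ht, mul_assoc], ?_⟩
    rw [evalW_cons, Subgroup.coe_mul, heval, List.map_cons, ht]
    simp [kernelHom, kernelGen, mul_assoc]

theorem exists_nonempty_traceNFA_evalFrom (u : List A) (y : B)
    (hu : ∀ n, (y : Q) * evalW (ψ.comp π) (u.take n) ∈ B) :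
    ∃ α : List (B × A), α.map Prod.snd = u ∧ ((traceNFA (ψ.comp π) B).evalFrom {y} α).Nonempty := by
  induction u generalizing y with
  | nil => exact ⟨[], rfl, ⟨y, rfl⟩⟩
  | cons a u ih =>
    obtain ⟨α, rfl, y', hy'⟩ := ih ⟨_, by simpa using hu 1⟩ fun n => by
      simpa [mul_assoc] using hu (n + 1)
    refine ⟨(y, a) :: α, rfl, y', ?_⟩
    rw [NFA.evalFrom_cons, NFA.stepSet_singleton, NFA.mem_evalFrom_iff_exists]
    exact ⟨_, ⟨rfl, rfl⟩, hy'⟩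

variable {hσ} {L : Language A}

theorem evalW_kernelHom_take (hσ1 : σ 1 = 1) {α : List (B × A)} (hα : α ∈ kernelLang π ψ B L)
    (n : ℕ) : evalW (ψ.comp π) ((α.map Prod.snd).take n) ∈ B ∧
      ((evalW (kernelHom π ψ hσ B) (α.take n) : ψ.ker) : G) =
        evalW π ((α.map Prod.snd).take n) * (σ (evalW (ψ.comp π) ((α.map Prod.snd).take n)))⁻¹ := by
  obtain ⟨_, -, hy'⟩ := hα.2
  obtain ⟨z, hz⟩ := NFA.nonempty_evalFrom_take ⟨_, hy'⟩ n
  obtain ⟨y, hy1, hz⟩ := NFA.mem_evalFrom_iff_exists.mp hz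
  obtain ⟨hzval, heval⟩ := mem_traceNFA_evalFrom hσ hz
  rw [show (y : Q) = 1 from hy1, one_mul, List.map_take] at hzval
  rw [heval, ← hzval, show (y : Q) = 1 from hy1, hσ1, one_mul, List.map_take]
  exact ⟨z.2, rfl⟩

theorem evalW_kernelHom (hσ1 : σ 1 = 1) {α : List (B × A)} (hα : α ∈ kernelLang π ψ B L) :
    evalW (ψ.comp π) (α.map Prod.snd) = 1 ∧
      ((evalW (kernelHom π ψ hσ B) α : ψ.ker) : G) = evalW π (α.map Prod.snd) := by
  obtain ⟨y', hy'1, hy'⟩ := hα.2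
  obtain ⟨y, hy1, hy'⟩ := NFA.mem_evalFrom_iff_exists.mp hy'
  obtain ⟨hval, -⟩ := mem_traceNFA_evalFrom hσ hy'
  have h1 : evalW (ψ.comp π) (α.map Prod.snd) = 1 := by
    simpa [show (y : Q) = 1 from hy1, show (y' : Q) = 1 from hy'1] using hval.symm
  refine ⟨h1, ?_⟩
  have := (evalW_kernelHom_take (hσ := hσ) hσ1 hα α.length).2
  rwa [List.take_length, List.take_of_length_le (by simp), h1, hσ1, inv_one, mul_one] at this

theorem exists_fellowTravel_kernelLang [Finite A] (hσ1 : σ 1 = 1) (hG : IsAutomaticStructure π L)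
    (hK : Function.Surjective (kernelHom π ψ hσ B)) :
    ∃ c : ℕ, ∀ α ∈ kernelLang π ψ B L, ∀ β ∈ kernelLang π ψ B L,
      wdist (kernelHom π ψ hσ B) (evalW (kernelHom π ψ hσ B) α) (evalW (kernelHom π ψ hσ B) β) ≤ 1 →
        FellowTravel (kernelHom π ψ hσ B) c α β := by
  set K := kernelHom π ψ hσ B
  have hπ := hG.surjective
  obtain ⟨R, hR⟩ := exists_wdist_gens_map_le (π := π) K ψ.ker.subtype
  obtain ⟨S, hS⟩ := (B.finite_toSet.image fun y => wdist π 1 (σ y)).bddAbove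
  obtain ⟨N, hN⟩ := hG.exists_fellowTravel_of_wdist_le
  obtain ⟨c, hc⟩ :=
    exists_wdist_le_of_wdist_map_le hπ K ψ.ker.subtype_injective (S + N * (R + 1) + S)
  refine ⟨c, fun α hα β hβ hd => fellowTravel_natCast_iff.mpr fun n => ?_⟩
  have huv : wdist π (evalW π (α.map Prod.snd)) (evalW π (β.map Prod.snd)) ≤ R := by
    rw [← (evalW_kernelHom hσ1 hα).2, ← (evalW_kernelHom hσ1 hβ).2]
    simpa using (wdist_map_le hK hπ hR _ _).trans (Nat.mul_le_mul_left R hd)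
  obtain ⟨hyB, hα'⟩ := evalW_kernelHom_take hσ1 hα n
  obtain ⟨hzB, hβ'⟩ := evalW_kernelHom_take hσ1 hβ n
  rw [wdist_eq_wdist_one]
  refine hc _ ?_
  rw [map_mul, map_inv, ψ.ker.coe_subtype, hα', hβ',
    show ∀ a b c d : G, (a * b⁻¹)⁻¹ * (c * d⁻¹) = b * (a⁻¹ * c) * d⁻¹ by intros; group]
  calc _ ≤ _ := wdist_one_mul_le hπ _ _
    _ ≤ _ := add_le_add (wdist_one_mul_le hπ _ _) (wdist_one_inv hπ _).le
    _ ≤ S + N * (R + 1) + S := by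
      gcongr
      · exact hS ⟨_, hyB, rfl⟩
      · rw [← wdist_eq_wdist_one]
        exact hN R _ hα.1 _ hβ.1 huv n
      · exact hS ⟨_, hzB, rfl⟩

theorem isAutomaticStructure_kernelLang [Finite A] (hσ1 : σ 1 = 1) (hG : IsAutomaticStructure π L)
    (hB : ∀ u ∈ L, evalW (ψ.comp π) u = 1 → ∀ n, evalW (ψ.comp π) (u.take n) ∈ B) :
    IsAutomaticStructure (kernelHom π ψ hσ B) (kernelLang π ψ B L) := by
  have onto (g : ψ.ker) : ∃ α ∈ kernelLang π ψ B L, evalW (kernelHom π ψ hσ B) α = g := by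
    obtain ⟨u, hu, hug⟩ := hG.onto g
    have hu1 : evalW (ψ.comp π) u = 1 := by rw [evalW_comp, hug]; exact g.2
    obtain ⟨α, rfl, y', hy'⟩ := exists_nonempty_traceNFA_evalFrom (π := π) (ψ := ψ) u
      ⟨1, by simpa using hB u hu hu1 0⟩ (by simpa using hB u hu hu1)
    have hα : α ∈ kernelLang π ψ B L :=
      ⟨hu, y', show (y' : Q) = 1 by simpa [hu1] using (mem_traceNFA_evalFrom hσ hy').1,
        NFA.mem_evalFrom_iff_exists.mpr ⟨_, rfl, hy'⟩⟩
    exact ⟨α, hα, Subtype.ext ((evalW_kernelHom hσ1 hα).2.trans hug)⟩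
  refine ⟨?_, onto, exists_fellowTravel_kernelLang hσ1 hG (surjective_of_onto onto)⟩
  exact Language.IsRegular.inf (hG.regular.preimage_map Prod.snd)
    (Language.isRegular_iff.mpr ⟨Set B, Fintype.ofFinite _, _, NFA.toDFA_correct⟩)

end KernelStructure

theorem exists_section_of_surjective {G Q : Type*} [Group G] [Group Q] {ψ : G →* Q}
    (hψ : Function.Surjective ψ) : ∃ σ : Q → G, σ 1 = 1 ∧ ∀ y, ψ (σ y) = y := by
  classical
  refine ⟨Function.update (Function.surjInv hψ) 1 1, by simp, fun y => ?_⟩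
  rcases eq_or_ne y 1 with rfl | hy
  · simp
  · simp [Function.update_of_ne hy, Function.surjInv_eq hψ]

theorem IsAutomaticStructure.isAutomaticGroup_ker {A G Q : Type*} [Group G] [Group Q] [Finite A]
    {π : FreeMonoid A →* G} {L : Language A} (hG : IsAutomaticStructure π L) (ψ : G →* Q)
    (hQ : IsAutomaticStructure (ψ.comp π) L) : IsAutomaticGroup ψ.ker := by
  obtain ⟨M, hM⟩ := hQ.exists_prefix_bound
  obtain ⟨σ, hσ1, hσ⟩ := exists_section_of_surjective (Function.Surjective.of_comp hQ.surjective)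
  exact (isAutomaticStructure_kernelLang (hσ := hσ) hσ1 hG
    (B := (finite_setOf_wdist_le hQ.surjective M).toFinset)
    fun u hu hu1 n => by simpa using hM u hu hu1 n).isAutomaticGroup

end Auto

open Auto

theorem ker_quasiconvex_general {A G : Type*} [Fintype A] [Group G]
    (π₁ : FreeMonoid A →* G) (L₁ : Language A) (h₁ : IsAutomaticStructure π₁ L₁) (φ : G →* G)
    (hind : IsAutomaticStructure (φ.rangeRestrict.comp π₁) L₁) :
    IsQuasiconvex (convHom π₁ (φ.rangeRestrict.comp π₁)) (convLang L₁ L₁)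
        ((φ.ker).prod (⊥ : Subgroup φ.range)) ∧
      IsAutomaticGroup φ.ker := by
  rw [← φ.ker_rangeRestrict]
  exact ⟨isQuasiconvex_ker_prod_bot h₁.surjective _ hind, h₁.isAutomaticGroup_ker _ hind⟩

/-- If `L₁` induces an automatic structure through `φ` and the BRP holds for
`(φ, L₁, L₂)`, then `{(x, 1) : x ∈ Ker φ} ≤ G × Gφ` is `(L₁ ⋄ L₁^(φ))`-quasiconvex; in
particular `Ker φ` is an automatic group. -/
theorem ker_quasiconvex {A B G : Type*} [Fintype A] [Fintype B] [Group G]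
    (π₁ : FreeMonoid A →* G) (hπ₁ : Function.Surjective π₁)
    (π₂ : FreeMonoid B →* G) (hπ₂ : Function.Surjective π₂)
    (L₁ : Language A) (L₂ : Language B)
    (h₁ : IsAutomaticStructure π₁ L₁) (h₂ : IsAutomaticStructure π₂ L₂)
    (φ : G →* G)
    (hind : IsAutomaticStructure (φ.rangeRestrict.comp π₁) L₁)
    (hbrp : BRP π₁ π₂ φ L₁ L₂) :
    IsQuasiconvex (convHom π₁ (φ.rangeRestrict.comp π₁)) (convLang L₁ L₁)
        ((φ.ker).prod (⊥ : Subgroup φ.range)) ∧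
      IsAutomaticGroup φ.ker :=
  ker_quasiconvex_general π₁ L₁ h₁ φ hind
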